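/- arXiv:math/0606440 — 3 statements merged into one kernel-verified Lean document; each statement's English description precedes it below -/
import Mathlib

section
/- For every x ∈ (0,1), the jump of φ'/φ across the branch cut [0,1] equals 2πi times the density w: lim_{ε→0⁺} [ φ'(x+iε)/φ(x+iε) − φ'(x−iε)/φ(x−iε) ] = 2πi·w(x), where w(x) = (√3/(4π))·((1+√(1−x))^{1/3} + (1−√(1−x))^{1/3})/(x^{2/3}·√(1−x)) with real roots of positive reals. -/
open Filter Topology Polynomial

/-- Argument in `[0, 2π)`. -/
noncomputable def argNN (z : ℂ) : ℝ :=
  if Complex.arg z < 0 then Complex.arg z + 2 * Real.pi else Complex.arg z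

/-- Square root with branch cut along the positive real axis:
`ρ e^{iθ} ↦ ρ^{1/2} e^{iθ/2}` with `θ ∈ [0, 2π)`. -/
noncomputable def csqrt (z : ℂ) : ℂ :=
  ((‖z‖ ^ ((1 : ℝ) / 2) : ℝ) : ℂ) * Complex.exp (Complex.I * (argNN z : ℂ) / 2)

/-- Principal cube root: `ρ e^{iθ} ↦ ρ^{1/3} e^{iθ/3}` with `θ ∈ (−π, π]`. -/
noncomputable def ccbrt (z : ℂ) : ℂ :=
  ((‖z‖ ^ ((1 : ℝ) / 3) : ℝ) : ℂ) * Complex.exp (Complex.I * (Complex.arg z : ℂ) / 3)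

/-- `ω₃ = e^{2πi/3}`. -/
noncomputable def ω₃ : ℂ := Complex.exp (2 * (Real.pi : ℂ) * Complex.I / 3)

/-- The function `φ` from the paper. -/
noncomputable def phi (z : ℂ) : ℂ :=
  (27 / 4) * ((3 * ω₃ / 2) * ccbrt z *
    (ω₃ * ccbrt (-1 + csqrt (1 - z)) + ccbrt (-1 - csqrt (1 - z))) - 1)

/-- The density `w` of the measure `υ_{[0,1]}`. -/
noncomputable def w (x : ℝ) : ℝ :=
  (Real.sqrt 3 / (4 * Real.pi)) *
    (((1 + Real.sqrt (1 - x)) ^ ((1 : ℝ) / 3) + (1 - Real.sqrt (1 - x)) ^ ((1 : ℝ) / 3)) /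
      (x ^ ((2 : ℝ) / 3) * Real.sqrt (1 - x)))

/-! In the upper half-plane every branch in `φ` is a principal one up to a sixth root of unity,
and there `φ = -(27/8) ψ³` with `ψ z = (1 - s) ^ (1/3) - ζ₆ (1 + s) ^ (1/3)`, `s = (1 - z) ^ (1/2)`:
the cube root of `z = (1 - s) (1 + s)` is the product of those of `1 ∓ s`, and since the cubes of
the latter add up to `2` the expression becomes a perfect cube. Now `ψ` is analytic across
`(0, 1)` and `φ (conj z) = conj (φ z)` off the real axis, so `φ'/φ` tends to `L = 3 ψ'/ψ` from
above and to `conj L` from below. The jump `2 i Im L` is computed at `x = 1 - σ²`, where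
`ψ x = p - ζ₆ q` with `p, q` the real cube roots of `1 ∓ σ`. -/

open Complex ComplexConjugate
open scoped Real

noncomputable def ζ₆ : ℂ := exp (π * I / 3)

lemma ζ₆_eq : ζ₆ = (1 + √3 * I) / 2 := by
  rw [ζ₆, show (π : ℂ) * I / 3 = ((π / 3 : ℝ) : ℂ) * I by push_cast; ring, exp_mul_I,
    ← ofReal_cos, ← ofReal_sin, Real.cos_pi_div_three, Real.sin_pi_div_three]
  push_cast
  ring

lemma ζ₆_sq : ζ₆ ^ 2 = ζ₆ - 1 := by
  have h3 : (√3 : ℂ) ^ 2 = 3 := by norm_cast; simp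
  rw [ζ₆_eq]
  linear_combination (1 / 4 : ℂ) * h3 * I ^ 2 + (3 / 4 : ℂ) * I_sq

lemma conj_ζ₆ : conj ζ₆ = 1 - ζ₆ := by
  rw [ζ₆_eq, map_div₀, map_add, map_mul, conj_ofReal, conj_I, map_one, map_ofNat]
  ring

lemma exp_neg_pi_mul_I_div_three : exp (-(π * I / 3)) = 1 - ζ₆ := by
  rw [← conj_ζ₆, ζ₆, ← exp_conj, map_div₀, map_mul, conj_ofReal, conj_I, map_ofNat]
  ring_nf

lemma ω₃_eq_ζ₆_sq : ω₃ = ζ₆ ^ 2 := by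
  rw [ω₃, ζ₆, ← exp_nat_mul]
  ring_nf

lemma ζ₆_re : ζ₆.re = 1 / 2 := by simp [ζ₆_eq]

lemma ζ₆_im : ζ₆.im = √3 / 2 := by simp [ζ₆_eq]

lemma cpow_ofReal_eq_polar {z : ℂ} (hz : z ≠ 0) (r : ℝ) :
    z ^ (r : ℂ) = ((‖z‖ ^ r : ℝ) : ℂ) * exp (I * arg z * r) := by
  rw [cpow_def_of_ne_zero hz, log, add_mul, exp_add, Real.rpow_def_of_pos (norm_pos_iff.2 hz),
    ofReal_exp]
  push_cast
  ring_nf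

lemma ccbrt_eq_cpow (z : ℂ) : ccbrt z = z ^ (1 / 3 : ℂ) := by
  rcases eq_or_ne z 0 with rfl | hz
  · simp [ccbrt]
  · rw [ccbrt, show (1 / 3 : ℂ) = ((1 / 3 : ℝ) : ℂ) by push_cast; ring, cpow_ofReal_eq_polar hz]
    push_cast
    ring_nf

lemma csqrt_of_arg_neg {z : ℂ} (h : arg z < 0) : csqrt z = -z ^ (1 / 2 : ℂ) := by
  have hz : z ≠ 0 := by rintro rfl; simp at h
  rw [csqrt, argNN, if_pos h, show (1 / 2 : ℂ) = ((1 / 2 : ℝ) : ℂ) by push_cast; ring,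
    cpow_ofReal_eq_polar hz,
    show I * ((arg z + 2 * π : ℝ) : ℂ) / 2 = I * arg z * ((1 / 2 : ℝ) : ℂ) + π * I by
      push_cast; ring,
    exp_add, exp_pi_mul_I]
  ring

lemma argNN_conj {z : ℂ} (hz : z.im ≠ 0) : argNN (conj z) = 2 * π - argNN z := by
  have hπ : arg z ≠ π := fun h => hz (arg_eq_pi_iff.1 h).2
  have h0 : arg z ≠ 0 := fun h => hz (arg_eq_zero_iff.1 h).2
  rw [argNN, argNN, arg_conj, if_neg hπ]
  rcases h0.lt_or_gt with h | h
  · rw [if_neg (by linarith), if_pos h]; ring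
  · rw [if_pos (by linarith), if_neg h.not_gt]; ring

lemma csqrt_conj {z : ℂ} (hz : z.im ≠ 0) : csqrt (conj z) = -conj (csqrt z) := by
  rw [csqrt, csqrt, argNN_conj hz, norm_conj, map_mul, conj_ofReal, ← exp_conj,
    show I * ((2 * π - argNN z : ℝ) : ℂ) / 2 = conj (I * (argNN z : ℂ) / 2) + π * I by
      rw [map_div₀, map_mul, conj_ofReal, conj_I, map_ofNat]; push_cast; ring,
    exp_add, exp_pi_mul_I]
  ring

lemma ccbrt_conj {z : ℂ} (hz : arg z ≠ π) : ccbrt (conj z) = conj (ccbrt z) := by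
  rw [ccbrt_eq_cpow, ccbrt_eq_cpow, conj_cpow _ _ hz]
  congr 2
  rw [map_div₀, map_one, map_ofNat]

lemma neg_cpow_of_im_neg {w : ℂ} (hw : w.im < 0) (c : ℂ) :
    (-w) ^ c = exp (π * I * c) * w ^ c := by
  have hw0 : w ≠ 0 := by rintro rfl; simp at hw
  rw [cpow_def_of_ne_zero hw0, cpow_def_of_ne_zero (neg_ne_zero.2 hw0), ← exp_add, log, log,
    arg_neg_eq_arg_add_pi_of_im_neg hw, norm_neg]
  push_cast
  ring_nf

lemma neg_cpow_of_im_pos {w : ℂ} (hw : 0 < w.im) (c : ℂ) :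
    (-w) ^ c = exp (-(π * I * c)) * w ^ c := by
  have hw0 : w ≠ 0 := by rintro rfl; simp at hw
  rw [cpow_def_of_ne_zero hw0, cpow_def_of_ne_zero (neg_ne_zero.2 hw0), ← exp_add, log, log,
    arg_neg_eq_arg_sub_pi_of_im_pos hw, norm_neg]
  push_cast
  ring_nf

lemma mul_cpow_of_arg_add_mem {a b : ℂ} (ha : a ≠ 0) (hb : b ≠ 0)
    (h : arg a + arg b ∈ Set.Ioc (-π) π) (c : ℂ) : (a * b) ^ c = a ^ c * b ^ c := by
  rw [cpow_def_of_ne_zero (mul_ne_zero ha hb), cpow_def_of_ne_zero ha, cpow_def_of_ne_zero hb,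
    log_mul ha hb h, add_mul, exp_add]

lemma im_cpow_half_neg {w : ℂ} (hw : w.im < 0) : (w ^ (1 / 2 : ℂ)).im < 0 := by
  have hw0 : w ≠ 0 := by rintro rfl; simp at hw
  have harg : arg w < 0 := arg_neg_iff.2 hw
  rw [show (1 / 2 : ℂ) = ((1 / 2 : ℝ) : ℂ) by push_cast; ring, cpow_ofReal_eq_polar hw0,
    show I * arg w * ((1 / 2 : ℝ) : ℂ) = ((arg w / 2 : ℝ) : ℂ) * I by push_cast; ring,
    im_ofReal_mul, exp_ofReal_mul_I_im]
  exact mul_neg_of_pos_of_neg (by positivity)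
    (Real.sin_neg_of_neg_of_neg_pi_lt (by linarith) (by linarith [neg_pi_lt_arg w]))

lemma csqrt_sq (z : ℂ) : csqrt z ^ 2 = z := by
  have hsq : (z ^ (1 / 2 : ℂ)) ^ 2 = z := by rw [← cpow_nat_mul]; norm_num
  by_cases h : arg z < 0
  · rw [csqrt_of_arg_neg h, neg_sq, hsq]
  · rcases eq_or_ne z 0 with rfl | hz
    · simp [csqrt]
    have hprin : csqrt z = z ^ (1 / 2 : ℂ) := by
      rw [csqrt, argNN, if_neg h, show (1 / 2 : ℂ) = ((1 / 2 : ℝ) : ℂ) by push_cast; ring,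
        cpow_ofReal_eq_polar hz]
      push_cast
      ring_nf
    rw [hprin, hsq]

lemma cpow_third_pow_three (w : ℂ) : (w ^ (1 / 3 : ℂ)) ^ 3 = w := by
  rw [← cpow_nat_mul]; norm_num

theorem phi_conj {z : ℂ} (hz : z.im ≠ 0) : phi (conj z) = conj (phi z) := by
  set S := csqrt (1 - z)
  have hS_im : S.im ≠ 0 := by
    intro h
    have hsq : S ^ 2 = 1 - z := csqrt_sq _
    have := congrArg im hsq
    simp only [sq, mul_im, h, mul_zero, zero_mul, add_zero, sub_im, one_im, zero_sub,
      zero_eq_neg] at this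
    exact hz this
  have not_pi {w : ℂ} (hw : w.im ≠ 0) : arg w ≠ π := fun h => hw (arg_eq_pi_iff.1 h).2
  have hsqrt : csqrt (1 - conj z) = -conj S := by
    rw [← csqrt_conj (by simpa using hz), map_sub, map_one]
  have hB : ccbrt (-1 + -conj S) = conj (ccbrt (-1 - S)) := by
    rw [← ccbrt_conj (not_pi (by simpa using hS_im))]
    simp only [map_sub, map_neg, map_one]
    ring_nf
  have hA : ccbrt (-1 - -conj S) = conj (ccbrt (-1 + S)) := by
    rw [← ccbrt_conj (not_pi (by simpa using hS_im))]
    simp only [sub_neg_eq_add, map_add, map_neg, map_one]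
  rw [phi, phi, hsqrt, hB, hA, ccbrt_conj (not_pi hz), ω₃_eq_ζ₆_sq]
  simp only [map_mul, map_sub, map_add, map_div₀, map_pow, map_ofNat, map_one, conj_ζ₆]
  set C := conj (ccbrt z)
  set A := conj (ccbrt (-1 + S))
  set B := conj (ccbrt (-1 - S))
  linear_combination (-81 / 8 * C * B - 81 / 8 * C * A + 81 / 8 * ζ₆ * C * B + 243 / 8 * ζ₆ * C * A
    + 81 / 8 * ζ₆ ^ 2 * C * B - 81 / 8 * ζ₆ ^ 2 * C * A) * ζ₆_sq

noncomputable def psi (z : ℂ) : ℂ :=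
  (1 - (1 - z) ^ (1 / 2 : ℂ)) ^ (1 / 3 : ℂ) - ζ₆ * (1 + (1 - z) ^ (1 / 2 : ℂ)) ^ (1 / 3 : ℂ)

theorem phi_eq_neg_psi_cube {z : ℂ} (hz : 0 < z.im) : phi z = -(27 / 8) * psi z ^ 3 := by
  set s := (1 - z) ^ (1 / 2 : ℂ) with hs
  have hs_im : s.im < 0 := im_cpow_half_neg (by simpa using hz)
  have hs_sq : s ^ 2 = 1 - z := by rw [hs, ← cpow_nat_mul]; norm_num
  have hsub_im : 0 < (1 - s).im := by simpa using hs_im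
  have hadd_im : (1 + s).im < 0 := by simpa using hs_im
  have hcbrt_z : z ^ (1 / 3 : ℂ) = (1 - s) ^ (1 / 3 : ℂ) * (1 + s) ^ (1 / 3 : ℂ) := by
    rw [← mul_cpow_of_arg_add_mem, show (1 - s) * (1 + s) = z by linear_combination -hs_sq]
    · rintro h; simp [h] at hsub_im
    · rintro h; simp [h] at hadd_im
    · constructor
      · linarith [arg_nonneg_iff.2 hsub_im.le, neg_pi_lt_arg (1 + s)]
      · linarith [arg_le_pi (1 - s), arg_neg_iff.2 hadd_im]
  have hcbrt_sub : ccbrt (-1 - -s) = (1 - ζ₆) * (1 - s) ^ (1 / 3 : ℂ) := by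
    rw [ccbrt_eq_cpow, show -1 - -s = -(1 - s) by ring, neg_cpow_of_im_pos hsub_im,
      ← exp_neg_pi_mul_I_div_three]
    ring_nf
  have hcbrt_add : ccbrt (-1 + -s) = ζ₆ * (1 + s) ^ (1 / 3 : ℂ) := by
    rw [ccbrt_eq_cpow, show -1 + -s = -(1 + s) by ring, neg_cpow_of_im_neg hadd_im, ζ₆]
    ring_nf
  have harg : arg (1 - z) < 0 := arg_neg_iff.2 (by simpa using hz)
  rw [phi, csqrt_of_arg_neg harg, ← hs, hcbrt_sub, hcbrt_add, ccbrt_eq_cpow, hcbrt_z, psi, ← hs,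
    ω₃_eq_ζ₆_sq]
  have hP := cpow_third_pow_three (1 - s)
  have hQ := cpow_third_pow_three (1 + s)
  set P := (1 - s) ^ (1 / 3 : ℂ)
  set Q := (1 + s) ^ (1 / 3 : ℂ)
  linear_combination (-27 / 8 * Q ^ 3 - 27 / 8 * ζ₆ * Q ^ 3 - 81 / 8 * ζ₆ * P ^ 2 * Q
    + 81 / 8 * ζ₆ ^ 2 * P * Q ^ 2 + 81 / 8 * ζ₆ ^ 3 * P * Q ^ 2) * ζ₆_sq + 27 / 8 * hP + 27 / 8 * hQ

theorem tendsto_logDeriv_sub_logDeriv_conj {f F : ℂ → ℂ} {x : ℝ} (hF : AnalyticAt ℂ F x)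
    (hFx : F x ≠ 0) (hf : ∀ z, 0 < z.im → f z = F z)
    (hf_conj : ∀ z, 0 < z.im → f (conj z) = conj (f z)) :
    Tendsto (fun ε : ℝ => logDeriv f (x + ε * I) - logDeriv f (x - ε * I)) (𝓝[>] 0)
      (𝓝 (logDeriv F x - conj (logDeriv F x))) := by
  have hcont : ContinuousAt (logDeriv F) x := hF.deriv.continuousAt.div hF.continuousAt hFx
  have hpath : Tendsto (fun ε : ℝ => (x : ℂ) + ε * I) (𝓝[>] 0) (𝓝 x) := by
    have : Continuous (fun ε : ℝ => (x : ℂ) + ε * I) := by fun_prop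
    simpa using (this.tendsto 0).mono_left nhdsWithin_le_nhds
  have hlim := hcont.tendsto.comp hpath
  refine (hlim.sub ((continuous_conj.tendsto _).comp hlim)).congr' ?_
  filter_upwards [self_mem_nhdsWithin, hpath.eventually hF.eventually_analyticAt]
    with ε (hε : 0 < ε) hFε
  set z := (x : ℂ) + ε * I
  have hz : 0 < z.im := by simpa [z] using hε
  have hz_conj : (x : ℂ) - ε * I = conj z := by
    simp only [z, map_add, map_mul, conj_ofReal, conj_I]
    ring
  have h_upper : f =ᶠ[𝓝 z] F :=
    Filter.eventually_of_mem ((isOpen_lt continuous_const continuous_im).mem_nhds hz) hf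
  have h_lower : f =ᶠ[𝓝 (conj z)] conj ∘ F ∘ conj := by
    have hlow : 0 > (conj z).im := by simpa using hz
    filter_upwards [(isOpen_lt continuous_im continuous_const).mem_nhds hlow] with w (hw : w.im < 0)
    have hw' : 0 < (conj w).im := by simpa using hw
    simp [← hf _ hw', ← hf_conj _ hw']
  have hderiv : deriv f (conj z) = conj (deriv F z) :=
    (hFε.differentiableAt.hasDerivAt.conj_conj.congr_of_eventuallyEq h_lower).deriv
  simp only [Function.comp_apply, logDeriv_apply, hz_conj, hderiv, h_upper.deriv_eq,
    hf z hz, hf_conj z hz, map_div₀]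
  rfl

lemma cpow_one_div_ofReal {a : ℝ} (ha : 0 ≤ a) (n : ℕ) :
    (a : ℂ) ^ (1 / n : ℂ) = ((a ^ (1 / n : ℝ) : ℝ) : ℂ) := by
  rw [ofReal_cpow ha]
  push_cast
  rfl

lemma rpow_third_pow_three {a : ℝ} (ha : 0 ≤ a) : (a ^ (1 / 3 : ℝ)) ^ 3 = a := by
  rw [← Real.rpow_natCast, ← Real.rpow_mul ha]; norm_num

lemma im_div_sub_ζ₆_mul {p q σ : ℝ} (hp : p ≠ 0) (hq : q ≠ 0) (hσ : σ ≠ 0) :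
    ((1 / (p : ℂ) ^ 2 + ζ₆ / (q : ℂ) ^ 2) / (6 * σ) / (p - ζ₆ * q)).im
      = √3 * (p + q) / (12 * σ * p ^ 2 * q ^ 2) := by
  have hB : (p - q / 2) ^ 2 + (√3 / 2 * q) ^ 2 ≠ 0 := by positivity
  simp only [pow_two, one_div, mul_inv_rev, div_im, add_im, mul_im, inv_re, ofReal_re, normSq,
    MonoidWithZeroHom.coe_mk, ZeroHom.coe_mk, ofReal_im, mul_zero, add_zero, div_self_mul_self',
    inv_im, neg_zero, zero_div, zero_mul, ζ₆_im, mul_re, sub_zero, ζ₆_re, zero_add, re_ofNat,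
    im_ofNat, add_re, div_re, sub_re, sub_im, zero_sub, mul_neg, neg_mul, neg_neg]
  field_simp
  rw [Real.sq_sqrt (by norm_num)]
  ring

section BoundaryValues

variable {σ : ℝ}

lemma one_sub_ofReal_one_sub_sq : 1 - ((1 - σ ^ 2 : ℝ) : ℂ) = ((σ ^ 2 : ℝ) : ℂ) := by
  push_cast; ring

lemma one_sub_cpow_half_of_one_sub_sq (hσ : 0 ≤ σ) :
    (1 - ((1 - σ ^ 2 : ℝ) : ℂ)) ^ (1 / 2 : ℂ) = σ := by
  rw [one_sub_ofReal_one_sub_sq, show (1 / 2 : ℂ) = 1 / (2 : ℕ) by norm_num,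
    cpow_one_div_ofReal (by positivity), Nat.cast_ofNat, ← Real.sqrt_eq_rpow, Real.sqrt_sq hσ]

lemma analyticAt_psi_one_sub_sq (hσ0 : 0 < σ) (hσ1 : σ < 1) :
    AnalyticAt ℂ psi ((1 - σ ^ 2 : ℝ) : ℂ) := by
  have hs := one_sub_cpow_half_of_one_sub_sq hσ0.le
  have h1 : 1 - ((1 - σ ^ 2 : ℝ) : ℂ) ∈ slitPlane := by
    rw [one_sub_ofReal_one_sub_sq]; exact ofReal_mem_slitPlane.2 (by positivity)
  have hs_an : AnalyticAt ℂ (fun z : ℂ => (1 - z) ^ (1 / 2 : ℂ)) ((1 - σ ^ 2 : ℝ) : ℂ) :=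
    (analyticAt_const.sub analyticAt_id).cpow analyticAt_const h1
  refine ((analyticAt_const.sub hs_an).cpow analyticAt_const ?_).sub
    (analyticAt_const.mul ((analyticAt_const.add hs_an).cpow analyticAt_const ?_))
  · simp only [Pi.sub_apply, hs]; exact Or.inl (by simpa using hσ1)
  · simp only [Pi.add_apply, hs]; exact Or.inl (by simp only [add_re, one_re, ofReal_re]; linarith)

lemma one_sub_ofReal_cpow_third (hσ : σ ≤ 1) :
    (1 - (σ : ℂ)) ^ (1 / 3 : ℂ) = ((1 - σ) ^ (1 / 3 : ℝ) : ℝ) := by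
  rw [show (1 : ℂ) - σ = ((1 - σ : ℝ) : ℂ) by push_cast; ring,
    show (1 / 3 : ℂ) = 1 / (3 : ℕ) by norm_num, cpow_one_div_ofReal (by linarith), Nat.cast_ofNat]

lemma one_add_ofReal_cpow_third (hσ : 0 ≤ σ) :
    (1 + (σ : ℂ)) ^ (1 / 3 : ℂ) = ((1 + σ) ^ (1 / 3 : ℝ) : ℝ) := by
  rw [show (1 : ℂ) + σ = ((1 + σ : ℝ) : ℂ) by push_cast; ring,
    show (1 / 3 : ℂ) = 1 / (3 : ℕ) by norm_num, cpow_one_div_ofReal (by linarith), Nat.cast_ofNat]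

lemma psi_one_sub_sq (hσ0 : 0 ≤ σ) (hσ1 : σ ≤ 1) :
    psi ((1 - σ ^ 2 : ℝ) : ℂ) = ((1 - σ) ^ (1 / 3 : ℝ) : ℝ) - ζ₆ * ((1 + σ) ^ (1 / 3 : ℝ) : ℝ) := by
  rw [psi, one_sub_cpow_half_of_one_sub_sq hσ0, one_sub_ofReal_cpow_third hσ1,
    one_add_ofReal_cpow_third hσ0]

lemma hasDerivAt_psi_one_sub_sq (hσ0 : 0 < σ) (hσ1 : σ < 1) :
    HasDerivAt psi ((1 / ((1 - σ) ^ (1 / 3 : ℝ) : ℝ) ^ 2 + ζ₆ / ((1 + σ) ^ (1 / 3 : ℝ) : ℝ) ^ 2)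
      / (6 * σ)) ((1 - σ ^ 2 : ℝ) : ℂ) := by
  set x : ℂ := ((1 - σ ^ 2 : ℝ) : ℂ)
  have hp := rpow_third_pow_three (a := 1 - σ) (by linarith)
  have hq := rpow_third_pow_three (a := 1 + σ) (by linarith)
  have hP := one_sub_ofReal_cpow_third hσ1.le
  have hQ := one_add_ofReal_cpow_third hσ0.le
  set p := (1 - σ) ^ (1 / 3 : ℝ)
  set q := (1 + σ) ^ (1 / 3 : ℝ)
  have hp0 : (p : ℂ) ≠ 0 := ofReal_ne_zero.2 (Real.rpow_pos_of_pos (by linarith) _).ne'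
  have hq0 : (q : ℂ) ≠ 0 := ofReal_ne_zero.2 (Real.rpow_pos_of_pos (by linarith) _).ne'
  have hσ : (σ : ℂ) ≠ 0 := ofReal_ne_zero.2 hσ0.ne'
  have hpC : (p : ℂ) ^ 3 = 1 - σ := by exact_mod_cast hp
  have hqC : (q : ℂ) ^ 3 = 1 + σ := by exact_mod_cast hq
  have hs := one_sub_cpow_half_of_one_sub_sq hσ0.le
  have h1x : 1 - x = (σ : ℂ) ^ 2 := by rw [one_sub_ofReal_one_sub_sq]; push_cast; ring
  have hds : HasDerivAt (fun z : ℂ => (1 - z) ^ (1 / 2 : ℂ)) (-(1 / (2 * σ))) x := by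
    have h1 : 1 - x ∈ slitPlane := by
      rw [one_sub_ofReal_one_sub_sq]; exact ofReal_mem_slitPlane.2 (by positivity)
    convert ((hasDerivAt_id' x).const_sub 1).cpow_const h1 using 1
    rw [cpow_sub _ _ (slitPlane_ne_zero h1), cpow_one, hs, h1x]
    field_simp
  have hdP : HasDerivAt (fun z : ℂ => (1 - (1 - z) ^ (1 / 2 : ℂ)) ^ (1 / 3 : ℂ))
      (1 / p ^ 2 / (6 * σ)) x := by
    have h1 : 1 - (1 - x) ^ (1 / 2 : ℂ) ∈ slitPlane := by
      rw [hs]; exact Or.inl (by simpa using hσ1)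
    convert (hds.const_sub 1).cpow_const h1 using 1
    rw [cpow_sub _ _ (slitPlane_ne_zero h1), cpow_one, hs, hP, ← hpC]
    field_simp
    norm_num
  have hdQ : HasDerivAt (fun z : ℂ => (1 + (1 - z) ^ (1 / 2 : ℂ)) ^ (1 / 3 : ℂ))
      (-(1 / q ^ 2 / (6 * σ))) x := by
    have h1 : 1 + (1 - x) ^ (1 / 2 : ℂ) ∈ slitPlane := by
      rw [hs]; exact Or.inl (by simp only [add_re, one_re, ofReal_re]; linarith)
    convert (hds.const_add 1).cpow_const h1 using 1
    rw [cpow_sub _ _ (slitPlane_ne_zero h1), cpow_one, hs, hQ, ← hqC]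
    field_simp
    norm_num
  exact (hdP.sub (hdQ.const_mul ζ₆)).congr_deriv (by ring)

lemma psi_one_sub_sq_ne_zero (hσ0 : 0 ≤ σ) (hσ1 : σ ≤ 1) :
    psi ((1 - σ ^ 2 : ℝ) : ℂ) ≠ 0 := by
  have hq : 0 < (1 + σ) ^ (1 / 3 : ℝ) := Real.rpow_pos_of_pos (by linarith) _
  rw [psi_one_sub_sq hσ0 hσ1]
  exact fun h => hq.ne' (by simpa [ζ₆_im] using congrArg im h)

lemma w_one_sub_sq (hσ0 : 0 ≤ σ) (hσ1 : σ ≤ 1) :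
    w (1 - σ ^ 2) = √3 / (4 * π) * ((1 + σ) ^ (1 / 3 : ℝ) + (1 - σ) ^ (1 / 3 : ℝ))
      / (((1 - σ) ^ (1 / 3 : ℝ)) ^ 2 * ((1 + σ) ^ (1 / 3 : ℝ)) ^ 2 * σ) := by
  have h23 : (1 - σ ^ 2) ^ (2 / 3 : ℝ)
      = ((1 - σ) ^ (1 / 3 : ℝ)) ^ 2 * ((1 + σ) ^ (1 / 3 : ℝ)) ^ 2 := by
    rw [show 1 - σ ^ 2 = (1 - σ) * (1 + σ) by ring, Real.mul_rpow (by linarith) (by linarith),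
      ← Real.rpow_natCast, ← Real.rpow_natCast, ← Real.rpow_mul (by linarith),
      ← Real.rpow_mul (by linarith)]
    norm_num
  rw [w, sub_sub_cancel, Real.sqrt_sq hσ0, h23]
  ring

lemma logDeriv_neg_psi_cube_sub_conj (hσ0 : 0 < σ) (hσ1 : σ < 1) :
    logDeriv (fun z => -(27 / 8) * psi z ^ 3) ((1 - σ ^ 2 : ℝ) : ℂ)
      - conj (logDeriv (fun z => -(27 / 8) * psi z ^ 3) ((1 - σ ^ 2 : ℝ) : ℂ))
      = 2 * π * I * w (1 - σ ^ 2) := by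
  have hd := hasDerivAt_psi_one_sub_sq hσ0 hσ1
  have hp : 0 < (1 - σ) ^ (1 / 3 : ℝ) := Real.rpow_pos_of_pos (by linarith) _
  have hq : 0 < (1 + σ) ^ (1 / 3 : ℝ) := Real.rpow_pos_of_pos (by linarith) _
  rw [logDeriv_const_mul _ _ (by norm_num), logDeriv_fun_pow hd.differentiableAt, logDeriv_apply,
    hd.deriv, psi_one_sub_sq hσ0.le hσ1.le, sub_conj, w_one_sub_sq hσ0.le hσ1.le]
  rw [show ∀ z : ℂ, ((3 : ℕ) * z).im = 3 * z.im from fun z => by simp,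
    im_div_sub_ζ₆_mul hp.ne' hq.ne' hσ0.ne']
  push_cast
  field_simp
  ring

end BoundaryValues

/-- the jump of `phi'/phi` across the branch cut equals `2 π i w x` on `(0,1)`. -/
theorem phi_logderiv_jump :
    ∀ x : ℝ, x ∈ Set.Ioo (0 : ℝ) 1 →
      Tendsto (fun ε : ℝ =>
          deriv phi ((x : ℂ) + (ε : ℂ) * Complex.I) / phi ((x : ℂ) + (ε : ℂ) * Complex.I)
            - deriv phi ((x : ℂ) - (ε : ℂ) * Complex.I) / phi ((x : ℂ) - (ε : ℂ) * Complex.I))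
        (𝓝[>] (0 : ℝ)) (𝓝 (2 * (Real.pi : ℂ) * Complex.I * (w x : ℂ))) := by
  rintro x ⟨hx0, hx1⟩
  obtain ⟨σ, hσ0, hσ1, rfl⟩ : ∃ σ : ℝ, 0 < σ ∧ σ < 1 ∧ 1 - σ ^ 2 = x :=
    ⟨√(1 - x), Real.sqrt_pos.2 (by linarith), (Real.sqrt_lt' one_pos).2 (by linarith),
      by rw [Real.sq_sqrt (by linarith)]; ring⟩
  have hjump := tendsto_logDeriv_sub_logDeriv_conj (x := 1 - σ ^ 2)
    (F := fun z => -(27 / 8) * psi z ^ 3) (by have := analyticAt_psi_one_sub_sq hσ0 hσ1; fun_prop)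
    (by simpa using psi_one_sub_sq_ne_zero hσ0.le hσ1.le) (fun _ hz => phi_eq_neg_psi_cube hz)
    (fun _ hz => phi_conj hz.ne')
  rwa [logDeriv_neg_psi_cube_sub_conj hσ0 hσ1] at hjump
end

section
/- Let p_n be a monic real polynomial of degree n with simple real zeros and let p_{n−1} be a monic real polynomial of degree n−1 with simple real zeros, such that the zeros of p_{n−1} and p_n interlace and all zeros of both polynomials lie in [m,M]. Then for every z ∈ ℂ \ [m,M], the derivative of the ratio satisfies |(p_{n−1}/p_n)'(z)| ≤ 1/dist(z,[m,M])², where dist(z,[m,M]) is the distance from z to the interval [m,M]. -/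
open Filter Topology Polynomial

/-!
Over the distinct zeros `y j` of `p`, partial fractions give `q / p = ∑ c j / (z - y j)` with
`c j = q (y j) / p' (y j)`. Interlacing makes every `c j` positive, and since `q` is monic of degree
`n - 1` their sum is the leading coefficient `1`. Hence
`|(q / p)'(z)| = |∑ c j / (z - y j)^2| ≤ ∑ c j / dist(z, [m, M])^2 = 1 / dist(z, [m, M])^2`.
-/

open Finset Lagrange

theorem Finset.prod_range_erase_eq_prod_range_pred {M : Type*} [CommMonoid M] (f : ℕ → M)
    {n j : ℕ} (hj : j < n) :
    ∏ k ∈ (range n).erase j, f k = ∏ k ∈ range (n - 1), f (if k < j then k else k + 1) := by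
  refine prod_nbij' (fun k => if k < j then k else k - 1) (fun k => if k < j then k else k + 1)
    ?_ ?_ ?_ ?_ ?_ <;>
  · intro k hk
    simp only [mem_erase, mem_range] at hk ⊢
    split_ifs <;> first | rfl | omega | (congr 1; omega)

theorem Polynomial.Monic.eq_nodal {R ι : Type*} [CommRing R] [IsDomain R] {p : R[X]}
    (hp : p.Monic) {s : Finset ι} {v : ι → R} (hvs : Set.InjOn v s) (hdeg : p.natDegree = #s)
    (hroot : ∀ i ∈ s, p.eval (v i) = 0) : p = nodal s v :=
  eq_of_degree_le_of_eval_index_eq s hvs (by rw [degree_eq_natDegree hp.ne_zero, hdeg])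
    (by rw [degree_eq_natDegree hp.ne_zero, hdeg, degree_nodal])
    (by rw [hp.leadingCoeff, nodal_monic.leadingCoeff])
    (fun i hi => by rw [hroot i hi, eval_nodal_at_node hi])

theorem hasDerivAt_sum_div_sub {𝕜 ι : Type*} [NontriviallyNormedField 𝕜] {s : Finset ι}
    (c v : ι → 𝕜) {z : 𝕜} (hz : ∀ i ∈ s, z ≠ v i) :
    HasDerivAt (fun u => ∑ i ∈ s, c i / (u - v i)) (-∑ i ∈ s, c i / (z - v i) ^ 2) z := by
  rw [← sum_neg_distrib]
  refine HasDerivAt.fun_sum fun i hi => ?_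
  simpa [div_eq_mul_inv] using
    (((hasDerivAt_id z).sub_const (v i)).inv (sub_ne_zero.2 (hz i hi))).const_mul (c i)

theorem norm_sum_div_sq_le {𝕜 ι : Type*} [RCLike 𝕜] {s : Finset ι} {c : ι → ℝ}
    (hc : ∀ i ∈ s, 0 ≤ c i) (v : ι → 𝕜) {z : 𝕜} {d : ℝ} (hd : 0 < d)
    (hdz : ∀ i ∈ s, d ≤ ‖z - v i‖) :
    ‖∑ i ∈ s, (c i : 𝕜) / (z - v i) ^ 2‖ ≤ (∑ i ∈ s, c i) / d ^ 2 := by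
  rw [sum_div]
  refine (norm_sum_le _ _).trans (sum_le_sum fun i hi => ?_)
  rw [norm_div, norm_pow, RCLike.norm_ofReal, abs_of_nonneg (hc i hi)]
  gcongr
  exacts [hc i hi, hdz i hi]

namespace Lagrange

variable {F ι : Type*} [Field F] [DecidableEq ι]

def nodalResidue (s : Finset ι) (v : ι → F) (P : F[X]) (i : ι) : F :=
  P.eval (v i) / ∏ j ∈ s.erase i, (v i - v j)

variable {s : Finset ι} {v : ι → F} {P : F[X]}

theorem sum_nodalResidue (hvs : Set.InjOn v s) (hP : P.degree < #s) :
    ∑ i ∈ s, nodalResidue s v P i = P.coeff (#s - 1) :=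
  (coeff_eq_sum hvs hP).symm

theorem aeval_div_aeval_nodal {L : Type*} [Field L] [Algebra F L] (hvs : Set.InjOn v s)
    (hP : P.degree < #s) {x : L} (hx : ∀ i ∈ s, x ≠ algebraMap F L (v i)) :
    aeval x P / aeval x (nodal s v) =
      ∑ i ∈ s, algebraMap F L (nodalResidue s v P i) / (x - algebraMap F L (v i)) := by
  nth_rewrite 1 [eq_interpolate hvs hP]
  rw [interpolate_eq_sum, map_sum, sum_div]
  refine sum_congr rfl fun i hi => ?_
  have hxi : x - algebraMap F L (v i) ≠ 0 := sub_ne_zero.2 (hx i hi)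
  have hrest : aeval x (nodal (s.erase i) v) ≠ 0 := by
    simp only [nodal_eq, map_prod, map_sub, aeval_X, aeval_C]
    exact prod_ne_zero_iff.2 fun j hj => sub_ne_zero.2 (hx j (mem_of_mem_erase hj))
  rw [← nodal_eq, nodal_eq_mul_nodal_erase hi, map_mul, map_mul, aeval_C, map_sub, aeval_X,
    aeval_C, nodalResidue]
  field_simp

theorem hasDerivAt_aeval_div_aeval_nodal {𝕜 : Type*} [NontriviallyNormedField 𝕜] [Algebra F 𝕜]
    (hvs : Set.InjOn v s) (hP : P.degree < #s) {z : 𝕜} (hz : ∀ i ∈ s, z ≠ algebraMap F 𝕜 (v i)) :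
    HasDerivAt (fun u => aeval u P / aeval u (nodal s v))
      (-∑ i ∈ s, algebraMap F 𝕜 (nodalResidue s v P i) / (z - algebraMap F 𝕜 (v i)) ^ 2) z := by
  refine (hasDerivAt_sum_div_sub _ _ hz).congr_of_eventuallyEq ?_
  filter_upwards [(eventually_all_finset s).2 fun i hi => eventually_ne_nhds (hz i hi)] with u hu
  exact aeval_div_aeval_nodal hvs hP hu

end Lagrange

/-- Pair the root `y' k` of the numerator with the `k`-th node other than `y j`: by interlacing
both lie on the same side of `y j`, so every factor of the residue is positive. -/
theorem nodalResidue_nodal_pos_of_interlace {n : ℕ} {y y' : ℕ → ℝ}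
    (hy : StrictMonoOn y (Set.Iio n)) (hinterlace : ∀ j < n - 1, y j < y' j ∧ y' j < y (j + 1))
    {j : ℕ} (hj : j < n) : 0 < nodalResidue (range n) y (nodal (range (n - 1)) y') j := by
  rw [nodalResidue, eval_nodal, prod_range_erase_eq_prod_range_pred _ hj, ← prod_div_distrib]
  refine prod_pos fun k hk => ?_
  rw [mem_range] at hk
  have hjn : j ∈ Set.Iio n := hj
  split_ifs with hkj
  · have h1 : y' k < y j :=
      (hinterlace k hk).2.trans_le (hy.monotoneOn (Set.mem_Iio.2 (by omega)) hjn hkj)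
    have h2 : y k < y j := hy (Set.mem_Iio.2 (by omega)) hjn hkj
    exact div_pos (by linarith) (by linarith)
  · have h1 : y j < y' k :=
      (hy.monotoneOn hjn (Set.mem_Iio.2 (by omega)) (not_lt.1 hkj)).trans_lt (hinterlace k hk).1
    have h2 : y j < y (k + 1) := hy hjn (Set.mem_Iio.2 (by omega)) (by omega)
    exact div_pos_of_neg_of_neg (by linarith) (by linarith)

theorem ratio_deriv_bound_general (n : ℕ) (hn : 1 ≤ n) (p q : Polynomial ℝ)
    (hp : p.Monic) (hpdeg : p.natDegree = n)
    (hq : q.Monic) (hqdeg : q.natDegree = n - 1)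
    (y y' : ℕ → ℝ)
    (hyroot : ∀ j < n, p.eval (y j) = 0)
    (hymono : ∀ j k : ℕ, j < k → k < n → y j < y k)
    (hy'root : ∀ j < n - 1, q.eval (y' j) = 0)
    (hy'mono : ∀ j k : ℕ, j < k → k < n - 1 → y' j < y' k)
    (hinterlace : ∀ j < n - 1, y j < y' j ∧ y' j < y (j + 1))
    (m M : ℝ)
    (hyIn : ∀ j < n, y j ∈ Set.Icc m M) :
    ∀ z : ℂ, z ∉ (Complex.ofReal '' Set.Icc m M) →
      ‖deriv (fun u : ℂ => Polynomial.aeval u q / Polynomial.aeval u p) z‖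
        ≤ 1 / (Metric.infDist z (Complex.ofReal '' Set.Icc m M)) ^ 2 := by
  intro z hz
  set S := Complex.ofReal '' Set.Icc m M
  have hyS : ∀ j < n, (y j : ℂ) ∈ S := fun j hj => ⟨y j, hyIn j hj, rfl⟩
  have hd : 0 < Metric.infDist z S :=
    ((isCompact_Icc.image Complex.continuous_ofReal).isClosed.notMem_iff_infDist_pos
      ⟨_, hyS 0 hn⟩).1 hz
  have hy : StrictMonoOn y (Set.Iio n) := fun j _ k hk hjk => hymono j k hjk hk
  have hy' : StrictMonoOn y' (Set.Iio (n - 1)) := fun j _ k hk hjk => hy'mono j k hjk hk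
  have hyinj : Set.InjOn y (range n) := by simpa using hy.injOn
  have hp' : p = nodal (range n) y :=
    hp.eq_nodal hyinj (by simp [hpdeg]) (by simpa using hyroot)
  have hq' : q = nodal (range (n - 1)) y' :=
    hq.eq_nodal (by simpa using hy'.injOn) (by simp [hqdeg]) (by simpa using hy'root)
  have hqdeg' : q.degree < #(range n) := by
    rw [degree_eq_natDegree hq.ne_zero, hqdeg, card_range]
    exact_mod_cast Nat.sub_lt hn one_pos
  have hderiv := hasDerivAt_aeval_div_aeval_nodal (z := z) hyinj hqdeg'
    fun j hj h => hz (by rw [h]; exact hyS j (mem_range.1 hj))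
  rw [hp', hderiv.deriv, norm_neg]
  calc _ ≤ (∑ j ∈ range n, nodalResidue (range n) y q j) / Metric.infDist z S ^ 2 :=
        norm_sum_div_sq_le (fun j hj => hq' ▸ (nodalResidue_nodal_pos_of_interlace hy hinterlace
          (mem_range.1 hj)).le) _ hd fun j hj => by
            simpa [Complex.dist_eq] using Metric.infDist_le_dist_of_mem (hyS j (mem_range.1 hj))
    _ = 1 / Metric.infDist z S ^ 2 := by
        rw [sum_nodalResidue hyinj hqdeg', card_range, ← hqdeg,
          hq.coeff_natDegree]

/-- under the interlacing hypotheses with zeros in `[m, M]`, the derivative of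
the ratio `q/p` satisfies `|(q/p)'(z)| ≤ 1 / dist(z, [m, M])^2` outside `[m, M]`. -/
theorem ratio_deriv_bound (n : ℕ) (hn : 1 ≤ n) (p q : Polynomial ℝ)
    (hp : p.Monic) (hpdeg : p.natDegree = n)
    (hq : q.Monic) (hqdeg : q.natDegree = n - 1)
    (y y' : ℕ → ℝ)
    (hyroot : ∀ j < n, p.eval (y j) = 0)
    (hymono : ∀ j k : ℕ, j < k → k < n → y j < y k)
    (hy'root : ∀ j < n - 1, q.eval (y' j) = 0)
    (hy'mono : ∀ j k : ℕ, j < k → k < n - 1 → y' j < y' k)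
    (hinterlace : ∀ j < n - 1, y j < y' j ∧ y' j < y (j + 1))
    (m M : ℝ) (hmM : m ≤ M)
    (hyIn : ∀ j < n, y j ∈ Set.Icc m M)
    (hy'In : ∀ j < n - 1, y' j ∈ Set.Icc m M) :
    ∀ z : ℂ, z ∉ (Complex.ofReal '' Set.Icc m M) →
      ‖deriv (fun u : ℂ => Polynomial.aeval u q / Polynomial.aeval u p) z‖
        ≤ 1 / (Metric.infDist z (Complex.ofReal '' Set.Icc m M)) ^ 2 :=
  ratio_deriv_bound_general n hn p q hp hpdeg hq hqdeg y y' hyroot hymono hy'root hy'mono hinterlace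
    m M hyIn
end

section
/- For every z ∈ (0,1), ∫_z^1 u^{−1/2}·w(u) du = 2√z·(3√3/(4π))·[ (1+√(1−z))^{1/3} − (1−√(1−z))^{1/3} ]/z^{2/3}, where w(u) = (√3/(4π))·((1+√(1−u))^{1/3} + (1−√(1−u))^{1/3})/(u^{2/3}·√(1−u)) and all roots are real roots of positive reals. -/
open Filter Topology Polynomial

/-! The integrand has the explicit primitive
`G(u) = -(3√3/(2π)) u^(-1/6) (A(u) - B(u))`, `A(u) = (1 + √(1-u))^(1/3)`, `B(u) = (1 - √(1-u))^(1/3)`,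
which vanishes at `u = 1`. In `G'` the terms carrying `A - B` cancel because
`(1 + √(1-u)) (1 - √(1-u)) = u`, leaving exactly `u^(-1/2) w(u)`. The integrand blows up at `u = 1`,
but it is nonnegative and `G` is continuous there, which is all the fundamental theorem of
calculus needs. -/

open Set in
theorem intervalIntegral.integral_eq_sub_of_hasDerivAt_of_nonneg {g g' : ℝ → ℝ} {a b : ℝ}
    (hab : a ≤ b) (hcont : ContinuousOn g (Icc a b))
    (hderiv : ∀ x ∈ Ioo a b, HasDerivAt g (g' x) x) (hpos : ∀ x ∈ Ioo a b, 0 ≤ g' x) :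
    ∫ x in a..b, g' x = g b - g a :=
  intervalIntegral.integral_eq_sub_of_hasDeriv_right_of_le hab hcont
    (fun x hx => (hderiv x hx).hasDerivWithinAt)
    ((intervalIntegrable_iff_integrableOn_Ioc_of_le hab).2
      (intervalIntegral.integrableOn_deriv_of_nonneg hcont hderiv hpos))

lemma w_nonneg {x : ℝ} (hx : 0 ≤ x) : 0 ≤ w x := by
  have hs : Real.sqrt (1 - x) ≤ 1 := Real.sqrt_le_one.2 (by linarith)
  have hpi := Real.pi_pos
  have : 0 ≤ 1 - Real.sqrt (1 - x) := by linarith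
  unfold w
  positivity

noncomputable def wPrimitive (u : ℝ) : ℝ :=
  -(3 * Real.sqrt 3 / (2 * Real.pi)) * (u ^ (-(1 : ℝ) / 6) *
    ((1 + Real.sqrt (1 - u)) ^ ((1 : ℝ) / 3) - (1 - Real.sqrt (1 - u)) ^ ((1 : ℝ) / 3)))

lemma wPrimitive_one : wPrimitive 1 = 0 := by
  simp [wPrimitive]

lemma continuousOn_wPrimitive : ContinuousOn wPrimitive (Set.Ioi 0) := by
  have hs : Continuous fun u : ℝ => Real.sqrt (1 - u) := by fun_prop
  have hA : Continuous fun u : ℝ => (1 + Real.sqrt (1 - u)) ^ ((1 : ℝ) / 3) :=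
    (continuous_const.add hs).rpow_const fun _ => Or.inr (by norm_num)
  have hB : Continuous fun u : ℝ => (1 - Real.sqrt (1 - u)) ^ ((1 : ℝ) / 3) :=
    (continuous_const.sub hs).rpow_const fun _ => Or.inr (by norm_num)
  have hP : ContinuousOn (fun u : ℝ => u ^ (-(1 : ℝ) / 6)) (Set.Ioi 0) :=
    continuousOn_id.rpow_const fun _ hx => Or.inl (ne_of_gt hx)
  exact continuousOn_const.mul (hP.mul (hA.sub hB).continuousOn)

lemma hasDerivAt_wPrimitive {u : ℝ} (hu0 : 0 < u) (hu1 : u < 1) :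
    HasDerivAt wPrimitive (u ^ (-(1 : ℝ) / 2) * w u) u := by
  set s := Real.sqrt (1 - u) with hs
  have hs0 : 0 < s := Real.sqrt_pos.2 (by linarith)
  have hsq : s ^ 2 = 1 - u := Real.sq_sqrt (by linarith)
  have hs1 : s < 1 := by nlinarith
  have hds : HasDerivAt (fun x => Real.sqrt (1 - x)) (-1 / (2 * s)) u :=
    ((hasDerivAt_id' u).const_sub 1).sqrt (by linarith)
  have hA := (hds.const_add 1).rpow_const (p := (1 : ℝ) / 3) (Or.inl (by positivity))
  have hB := (hds.const_sub 1).rpow_const (p := (1 : ℝ) / 3) (Or.inl (by linarith))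
  have hP := Real.hasDerivAt_rpow_const (x := u) (p := -(1 : ℝ) / 6) (Or.inl hu0.ne')
  refine ((hP.mul (hA.sub hB)).const_mul (-(3 * Real.sqrt 3 / (2 * Real.pi)))).congr_deriv ?_
  have e : u ^ (-(1 : ℝ) / 2) = u ^ (-(1 : ℝ) / 6) / u * u ^ ((2 : ℝ) / 3) := by
    rw [← Real.rpow_sub_one hu0.ne', ← Real.rpow_add hu0]; norm_num
  rw [w, e, Real.rpow_sub_one hu0.ne', Real.rpow_sub_one (by linarith),
    Real.rpow_sub_one (by linarith), Pi.sub_apply, ← hs]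
  have hu : u = (1 + s) * (1 - s) := by linear_combination hsq
  have hQ : u ^ ((2 : ℝ) / 3) ≠ 0 := (Real.rpow_pos_of_pos hu0 _).ne'
  have : 1 - s ≠ 0 := by linarith
  have := Real.pi_ne_zero
  field_simp
  rw [hu]
  ring

/-- the integral identity behind the density of the asymptotic zero
distribution of the multiple orthogonal polynomials associated with Macdonald functions. -/
theorem integral_w_over_sqrt_u (z : ℝ) (hz : z ∈ Set.Ioo (0 : ℝ) 1) :
    ∫ u in z..1, u ^ (-(1 : ℝ) / 2) * w u
      = 2 * Real.sqrt z * ((3 * Real.sqrt 3 / (4 * Real.pi)) *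
        (((1 + Real.sqrt (1 - z)) ^ ((1 : ℝ) / 3)
            - (1 - Real.sqrt (1 - z)) ^ ((1 : ℝ) / 3))
          / z ^ ((2 : ℝ) / 3))) := by
  obtain ⟨hz0, hz1⟩ := hz
  have hpos : ∀ x ∈ Set.Ioo z 1, 0 < x := fun x hx => hz0.trans hx.1
  rw [intervalIntegral.integral_eq_sub_of_hasDerivAt_of_nonneg hz1.le
      (continuousOn_wPrimitive.mono fun x hx => hz0.trans_le hx.1)
      (fun x hx => hasDerivAt_wPrimitive (hpos x hx) hx.2)
      (fun x hx => mul_nonneg (Real.rpow_nonneg (hpos x hx).le _) (w_nonneg (hpos x hx).le)),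
    wPrimitive_one, zero_sub, wPrimitive]
  have hsqrt : Real.sqrt z = z ^ (-(1 : ℝ) / 6) * z ^ ((2 : ℝ) / 3) := by
    rw [Real.sqrt_eq_rpow, ← Real.rpow_add hz0]; norm_num
  have := (Real.rpow_pos_of_pos hz0 ((2 : ℝ) / 3)).ne'
  have := Real.pi_ne_zero
  rw [hsqrt]
  field_simp
  ring
end
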